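/- arXiv:2602.10599 — 2 statements merged into one kernel-verified Lean document; each statement's English description precedes it below -/
import Mathlib

section
/- Let μ > 0, 1 ≤ p < +∞, n ∈ ℕ with n ≥ 1, and let f ∈ L^p_μ([0,1]). Then ‖𝓛ₙᴷ f‖_{p,μ}^p ≤ (1 + 1/((n+1)(1+μ))) ‖f‖_{p,μ}^p; in particular ‖𝓛ₙᴷ f‖_{p,μ}^p ≤ K_μ ‖f‖_{p,μ}^p, where K_μ := 1 + 1/(1+μ). -/
open MeasureTheory Filter Set

/-- The logarithmic weight `ln_μ(x) = ln(1+μ+x)`. -/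
noncomputable def lnMu (μ x : ℝ) : ℝ := Real.log (1 + μ + x)

/-- The function `a_{n+1}(x)` from the paper. -/
noncomputable def aFun (μ : ℝ) (n : ℕ) (x : ℝ) : ℝ :=
  Real.log (1 + x / (((n : ℝ) + 1) * (1 + μ))) /
    Real.log (1 + 1 / (((n : ℝ) + 1) * (1 + μ)))

/-- Bernstein basis polynomial `p_{n,k}(x) = C(n,k) x^k (1-x)^{n-k}`. -/
noncomputable def bern (n k : ℕ) (x : ℝ) : ℝ :=
  (n.choose k : ℝ) * x ^ k * (1 - x) ^ (n - k)

/-- The Kantorovich logarithmic operator `𝓛ₙᴷ(f,x)`. -/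
noncomputable def LK (μ : ℝ) (n : ℕ) (f : ℝ → ℝ) (x : ℝ) : ℝ :=
  lnMu μ x * ∑ k ∈ Finset.range (n + 1),
    bern n k (aFun μ n x) * ((n : ℝ) + 1) *
      ∫ t in ((k : ℝ) / ((n : ℝ) + 1))..(((k : ℝ) + 1) / ((n : ℝ) + 1)), f t / lnMu μ t

/-- `γ_n := max_{x ∈ [0,1]} |a_{n+1}(x) - x|`. -/
noncomputable def gammaN (μ : ℝ) (n : ℕ) : ℝ :=
  ⨆ x : Set.Icc (0 : ℝ) 1, |aFun μ n (x : ℝ) - (x : ℝ)|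

/-- Unweighted L^p norm `(∫₀¹ |f|^p)^(1/p)` on [0,1]. -/
noncomputable def normP (p : ℝ) (f : ℝ → ℝ) : ℝ :=
  (∫ x in (0:ℝ)..1, |f x| ^ p) ^ (1 / p)

/-- Weighted L^p norm `(∫₀¹ |f/ln_μ|^p)^(1/p)` on [0,1]. -/
noncomputable def normPMu (μ p : ℝ) (f : ℝ → ℝ) : ℝ :=
  (∫ x in (0:ℝ)..1, |f x / lnMu μ x| ^ p) ^ (1 / p)


/-!
Put `g = f / ln_μ` and let `Kₙ` be the classical Kantorovich operator, so that
`𝓛ₙᴷ f / ln_μ = Kₙ g ∘ a_{n+1}` on `[0,1]`. Jensen's inequality, once for the Bernstein weights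
(which sum to `1`) and once for the averages over `[k/(n+1), (k+1)/(n+1)]`, gives
`|Kₙ g|^p ≤ Kₙ |g|^p`. The map `a_{n+1}` fixes `0` and `1`, and `log (1 + t) ≤ t` gives
`a'_{n+1} ≥ (1 + 1/((n+1)(1+μ)))⁻¹` on `[0,1]`, so substituting `y = a_{n+1}(x)` costs at most that
factor. Finally `∫₀¹ Kₙ h = ∫₀¹ h`, because every Bernstein basis polynomial of degree `n` has
integral `1/(n+1)`: consecutive ones have equal integrals since
`B'_{n+1,k+1} = (n+1)(B_{n,k} - B_{n,k+1})`, and they sum to `1`.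
-/

open intervalIntegral

lemma convexOn_abs_rpow {p : ℝ} (hp : 1 ≤ p) : ConvexOn ℝ univ fun x : ℝ => |x| ^ p := by
  refine ⟨convex_univ, fun x _ y _ a b ha hb hab => ?_⟩
  have hp0 : 0 ≤ p := by linarith
  calc |a • x + b • y| ^ p ≤ (a • |x| + b • |y|) ^ p := by
        gcongr
        simpa [abs_of_nonneg ha, abs_of_nonneg hb] using abs_add_le (a * x) (b * y)
    _ ≤ a • |x| ^ p + b • |y| ^ p :=
        (convexOn_rpow hp).2 (abs_nonneg x) (abs_nonneg y) ha hb hab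

lemma abs_intervalAverage_rpow_le {p a b : ℝ} (hp : 1 ≤ p) (hab : a < b) {g : ℝ → ℝ}
    (hg : IntervalIntegrable g volume a b)
    (hgp : IntervalIntegrable (fun t => |g t| ^ p) volume a b) :
    |(b - a)⁻¹ * ∫ t in a..b, g t| ^ p ≤ (b - a)⁻¹ * ∫ t in a..b, |g t| ^ p := by
  have hcont : ContinuousOn (fun x : ℝ => |x| ^ p) univ :=
    (continuous_abs.rpow_const fun _ => Or.inr (by linarith)).continuousOn
  have h := (convexOn_abs_rpow hp).map_set_average_le hcont isClosed_univ
    (by simp [uIoc_of_le hab.le, hab]) (by simp [uIoc_of_le hab.le])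
    (Eventually.of_forall fun _ => mem_univ _) hg.def' hgp.def'
  simpa only [interval_average_eq, smul_eq_mul] using h

lemma bern_eq_eval (n k : ℕ) (x : ℝ) : bern n k x = (bernsteinPolynomial ℝ n k).eval x := by
  simp [bern, bernsteinPolynomial]

lemma continuous_bern (n k : ℕ) : Continuous (bern n k) := by
  unfold bern; fun_prop

lemma bern_nonneg (n k : ℕ) {x : ℝ} (hx : x ∈ Icc (0 : ℝ) 1) : 0 ≤ bern n k x := by
  have : 0 ≤ 1 - x := by linarith [hx.2]
  have := hx.1
  unfold bern; positivity

lemma sum_bern (n : ℕ) (x : ℝ) : ∑ k ∈ Finset.range (n + 1), bern n k x = 1 := by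
  simp_rw [bern_eq_eval, ← Polynomial.eval_finsetSum, bernsteinPolynomial.sum,
    Polynomial.eval_one]

lemma integral_bern_succ {n k : ℕ} (hk : k < n) :
    ∫ x in (0 : ℝ)..1, bern n (k + 1) x = ∫ x in (0 : ℝ)..1, bern n k x := by
  set B := bernsteinPolynomial ℝ (n + 1) (k + 1)
  have hB : ∫ x in (0 : ℝ)..1, (Polynomial.derivative B).eval x = B.eval 1 - B.eval 0 :=
    integral_eq_sub_of_hasDerivAt (fun x _ => B.hasDerivAt x)
      (B.derivative.continuous.intervalIntegrable _ _)
  simp only [B, bernsteinPolynomial.derivative_succ_aux, bernsteinPolynomial.eval_at_0,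
    bernsteinPolynomial.eval_at_1, Polynomial.eval_mul, Polynomial.eval_sub, ← bern_eq_eval] at hB
  have hn : (n : ℝ) + 1 ≠ 0 := by positivity
  simp [integral_sub ((continuous_bern n k).intervalIntegrable _ _)
    ((continuous_bern n (k + 1)).intervalIntegrable _ _), show k ≠ n by omega, hn] at hB
  linarith

lemma integral_bern {n k : ℕ} (hk : k ≤ n) :
    ∫ x in (0 : ℝ)..1, bern n k x = 1 / ((n : ℝ) + 1) := by
  have hconst : ∀ j ≤ n, ∫ x in (0 : ℝ)..1, bern n j x = ∫ x in (0 : ℝ)..1, bern n 0 x := by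
    intro j hj
    induction j with
    | zero => rfl
    | succ j ih => rw [integral_bern_succ (by omega), ih (by omega)]
  have hsum : ∑ j ∈ Finset.range (n + 1), ∫ x in (0 : ℝ)..1, bern n j x = 1 := by
    rw [← integral_finsetSum fun j _ => (continuous_bern n j).intervalIntegrable _ _]
    simp [sum_bern]
  rw [Finset.sum_congr rfl fun j hj => hconst j (by simpa [Nat.lt_succ_iff] using hj),
    Finset.sum_const, Finset.card_range, nsmul_eq_mul] at hsum
  rw [hconst k hk, eq_div_iff (by positivity)]
  push_cast at hsum
  linarith

noncomputable def kantorovich (n : ℕ) (g : ℝ → ℝ) (y : ℝ) : ℝ :=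
  ∑ k ∈ Finset.range (n + 1), bern n k y * ((n : ℝ) + 1) *
    ∫ t in ((k : ℝ) / ((n : ℝ) + 1))..(((k : ℝ) + 1) / ((n : ℝ) + 1)), g t

section kantorovich

variable {n : ℕ} {g : ℝ → ℝ}

lemma continuous_kantorovich : Continuous (kantorovich n g) := by
  unfold kantorovich
  have := continuous_bern n
  fun_prop

lemma div_lt_succ_div (n k : ℕ) : (k : ℝ) / ((n : ℝ) + 1) < ((k : ℝ) + 1) / ((n : ℝ) + 1) := by
  gcongr; linarith

lemma uIcc_div_succ_subset {n k : ℕ} (hk : k ≤ n) :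
    uIcc ((k : ℝ) / ((n : ℝ) + 1)) (((k : ℝ) + 1) / ((n : ℝ) + 1)) ⊆ uIcc 0 1 := by
  have hk' : (k : ℝ) + 1 ≤ (n : ℝ) + 1 := by exact_mod_cast Nat.succ_le_succ hk
  rw [uIcc_of_le (div_lt_succ_div n k).le, uIcc_of_le zero_le_one]
  exact Icc_subset_Icc (by positivity) ((div_le_one (by positivity)).2 hk')

lemma kantorovich_nonneg (hg : ∀ t, 0 ≤ g t) {y : ℝ} (hy : y ∈ Icc (0 : ℝ) 1) :
    0 ≤ kantorovich n g y :=
  Finset.sum_nonneg fun k _ => mul_nonneg (by have := bern_nonneg n k hy; positivity)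
    (integral_nonneg (div_lt_succ_div n k).le fun t _ => hg t)

lemma abs_kantorovich_rpow_le {p : ℝ} (hp : 1 ≤ p) (hg : IntervalIntegrable g volume 0 1)
    (hgp : IntervalIntegrable (fun t => |g t| ^ p) volume 0 1) {y : ℝ}
    (hy : y ∈ Icc (0 : ℝ) 1) :
    |kantorovich n g y| ^ p ≤ kantorovich n (fun t => |g t| ^ p) y := by
  have hN : ∀ k : ℕ, ((k : ℝ) + 1) / ((n : ℝ) + 1) - k / ((n : ℝ) + 1) = ((n : ℝ) + 1)⁻¹ := by
    intro k; field_simp; ring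
  simp only [kantorovich, mul_assoc]
  refine ((convexOn_abs_rpow hp).map_sum_le (fun k _ => bern_nonneg n k hy) (sum_bern n y)
    fun _ _ => mem_univ _).trans (Finset.sum_le_sum fun k hk => ?_)
  have hkn : k ≤ n := Nat.lt_succ_iff.1 (Finset.mem_range.1 hk)
  have h := abs_intervalAverage_rpow_le hp (div_lt_succ_div n k)
    (hg.mono_set (uIcc_div_succ_subset hkn)) (hgp.mono_set (uIcc_div_succ_subset hkn))
  rw [hN k, inv_inv] at h
  exact mul_le_mul_of_nonneg_left h (bern_nonneg n k hy)

lemma integral_kantorovich (hg : IntervalIntegrable g volume 0 1) :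
    ∫ y in (0 : ℝ)..1, kantorovich n g y = ∫ t in (0 : ℝ)..1, g t := by
  have hN : (0 : ℝ) < (n : ℝ) + 1 := by positivity
  have hsplit := sum_integral_adjacent_intervals (a := fun k : ℕ => (k : ℝ) / ((n : ℝ) + 1))
    (n := n + 1) (f := g) (μ := volume) fun k hk => by
      simpa using hg.mono_set (uIcc_div_succ_subset (Nat.lt_succ_iff.1 hk))
  simp only [Nat.cast_zero, zero_div, Nat.cast_add, Nat.cast_one, div_self hN.ne'] at hsplit
  simp only [kantorovich]
  rw [← hsplit, integral_finsetSum fun k _ =>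
    Continuous.intervalIntegrable (by have := continuous_bern n k; fun_prop) _ _]
  refine Finset.sum_congr rfl fun k hk => ?_
  rw [intervalIntegral.integral_mul_const, intervalIntegral.integral_mul_const,
    integral_bern (Nat.lt_succ_iff.1 (Finset.mem_range.1 hk))]
  field_simp

end kantorovich

lemma integral_comp_le_mul_integral {φ φ' h : ℝ → ℝ} {a b K : ℝ} (hab : a ≤ b)
    (hφ : ∀ x ∈ Icc a b, HasDerivAt φ (φ' x) x) (hφ' : ContinuousOn φ' (Icc a b))
    (hK : ∀ x ∈ Icc a b, 1 ≤ K * φ' x) (hh : Continuous h)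
    (hh0 : ∀ x ∈ Icc a b, 0 ≤ h (φ x)) :
    ∫ x in a..b, h (φ x) ≤ K * ∫ y in φ a..φ b, h y := by
  rw [← uIcc_of_le hab] at hφ hφ'
  have hφc : ContinuousOn φ (uIcc a b) := fun x hx => (hφ x hx).continuousAt.continuousWithinAt
  have hhφ : ContinuousOn (fun x => h (φ x)) (uIcc a b) := hh.comp_continuousOn hφc
  rw [← integral_comp_mul_deriv hφ hφ' hh, ← intervalIntegral.integral_const_mul]
  refine integral_mono_on hab (hhφ.intervalIntegrable) ((continuousOn_const.mul
    (hhφ.mul hφ')).intervalIntegrable) fun x hx => ?_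
  calc h (φ x) = 1 * h (φ x) := (one_mul _).symm
    _ ≤ (K * φ' x) * h (φ x) := mul_le_mul_of_nonneg_right (hK x hx) (hh0 x hx)
    _ = K * ((h ∘ φ) x * φ' x) := by simp only [Function.comp]; ring

section aFun

variable {μ : ℝ} {n : ℕ}

noncomputable def aFunDeriv (μ : ℝ) (n : ℕ) (x : ℝ) : ℝ :=
  1 / (Real.log (1 + 1 / (((n : ℝ) + 1) * (1 + μ))) * (((n : ℝ) + 1) * (1 + μ) + x))

lemma log_one_add_one_div_pos {c : ℝ} (hc : 0 < c) : 0 < Real.log (1 + 1 / c) :=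
  Real.log_pos (by simp [hc])

lemma aFun_zero : aFun μ n 0 = 0 := by simp [aFun]

lemma aFun_one (hμ : 0 < 1 + μ) : aFun μ n 1 = 1 :=
  div_self (log_one_add_one_div_pos (by positivity)).ne'

lemma aFun_mem_Icc (hμ : 0 < 1 + μ) {x : ℝ} (hx : x ∈ Icc (0 : ℝ) 1) :
    aFun μ n x ∈ Icc (0 : ℝ) 1 := by
  have hc : 0 < ((n : ℝ) + 1) * (1 + μ) := by positivity
  have hL := log_one_add_one_div_pos hc
  have hxc : 0 ≤ x / (((n : ℝ) + 1) * (1 + μ)) := div_nonneg hx.1 hc.le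
  refine ⟨div_nonneg (Real.log_nonneg (by linarith)) hL.le, (div_le_one hL).2 ?_⟩
  gcongr
  exact hx.2

lemma hasDerivAt_aFun (hμ : 0 < 1 + μ) {x : ℝ} (hx : 0 ≤ x) :
    HasDerivAt (aFun μ n) (aFunDeriv μ n x) x := by
  set c := ((n : ℝ) + 1) * (1 + μ)
  have hc : 0 < c := by positivity
  have h : HasDerivAt (aFun μ n) (1 / c / (1 + x / c) / Real.log (1 + 1 / c)) x :=
    ((((hasDerivAt_id x).div_const c).const_add 1).log (by positivity)).div_const _
  refine h.congr_deriv ?_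
  change _ = 1 / (Real.log (1 + 1 / c) * (c + x))
  field_simp

lemma continuousOn_aFun (hμ : 0 < 1 + μ) : ContinuousOn (aFun μ n) (Icc 0 1) :=
  fun _ hx => (hasDerivAt_aFun hμ hx.1).continuousAt.continuousWithinAt

lemma continuousOn_aFunDeriv (hμ : 0 < 1 + μ) : ContinuousOn (aFunDeriv μ n) (Icc 0 1) := by
  have hc : 0 < ((n : ℝ) + 1) * (1 + μ) := by positivity
  have hL := log_one_add_one_div_pos hc
  refine continuousOn_const.div (by fun_prop) fun x hx => ?_
  have := hx.1
  positivity

lemma one_le_mul_aFunDeriv (hμ : 0 < 1 + μ) {x : ℝ} (hx : x ∈ Icc (0 : ℝ) 1) :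
    1 ≤ (1 + 1 / (((n : ℝ) + 1) * (1 + μ))) * aFunDeriv μ n x := by
  set c := ((n : ℝ) + 1) * (1 + μ)
  have hc : 0 < c := by positivity
  have hL := log_one_add_one_div_pos hc
  have hLc : Real.log (1 + 1 / c) ≤ 1 / c := by
    linarith [Real.log_le_sub_one_of_pos (show (0 : ℝ) < 1 + 1 / c by positivity)]
  have hcx : 0 < c + x := by linarith [hx.1]
  rw [aFunDeriv, mul_one_div, le_div_iff₀ (by positivity), one_mul]
  calc Real.log (1 + 1 / c) * (c + x) ≤ 1 / c * (c + 1) :=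
        mul_le_mul hLc (by linarith [hx.2]) hcx.le (by positivity)
    _ = 1 + 1 / c := by field_simp

lemma continuousOn_kantorovich_comp_aFun (hμ : 0 < 1 + μ) (H : ℝ → ℝ) :
    ContinuousOn (fun x => kantorovich n H (aFun μ n x)) (uIcc 0 1) := by
  rw [uIcc_of_le zero_le_one]
  exact continuous_kantorovich.comp_continuousOn (continuousOn_aFun hμ)

lemma integral_kantorovich_comp_aFun_le (hμ : 0 < 1 + μ) {H : ℝ → ℝ}
    (hH : IntervalIntegrable H volume 0 1) (hH0 : ∀ t, 0 ≤ H t) :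
    ∫ x in (0 : ℝ)..1, kantorovich n H (aFun μ n x) ≤
      (1 + 1 / (((n : ℝ) + 1) * (1 + μ))) * ∫ t in (0 : ℝ)..1, H t := by
  have h := integral_comp_le_mul_integral zero_le_one
    (fun x hx => hasDerivAt_aFun (n := n) hμ hx.1) (continuousOn_aFunDeriv hμ)
    (fun x hx => one_le_mul_aFunDeriv hμ hx) (continuous_kantorovich (n := n))
    fun x hx => kantorovich_nonneg hH0 (aFun_mem_Icc hμ hx)
  rwa [aFun_zero, aFun_one hμ, integral_kantorovich hH] at h

end aFun

section memLp

variable {g : ℝ → ℝ} {p a b : ℝ}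

lemma MeasureTheory.MemLp.intervalIntegrable_of_Icc (hp : 1 ≤ p) (hab : a ≤ b)
    (hg : MemLp g (ENNReal.ofReal p) (volume.restrict (Icc a b))) :
    IntervalIntegrable g volume a b := by
  rw [intervalIntegrable_iff_integrableOn_Ioc_of_le hab]
  exact IntegrableOn.mono_set (hg.integrable (by simpa using hp)) Ioc_subset_Icc_self

lemma MeasureTheory.MemLp.intervalIntegrable_abs_rpow_of_Icc (hp : 0 < p) (hab : a ≤ b)
    (hg : MemLp g (ENNReal.ofReal p) (volume.restrict (Icc a b))) :
    IntervalIntegrable (fun t => |g t| ^ p) volume a b := by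
  rw [intervalIntegrable_iff_integrableOn_Ioc_of_le hab]
  have h := hg.integrable_norm_rpow (by simpa using hp) ENNReal.ofReal_ne_top
  simp only [Real.norm_eq_abs, ENNReal.toReal_ofReal hp.le] at h
  exact IntegrableOn.mono_set h Ioc_subset_Icc_self

end memLp

lemma normPMu_rpow_eq {p : ℝ} (hp : 0 < p) (μ : ℝ) (f : ℝ → ℝ) :
    normPMu μ p f ^ p = ∫ x in (0 : ℝ)..1, |f x / lnMu μ x| ^ p := by
  rw [normPMu, ← Real.rpow_mul (integral_nonneg zero_le_one fun x _ => by positivity),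
    one_div_mul_cancel hp.ne', Real.rpow_one]

lemma LK_div_lnMu {μ x : ℝ} (hμ : 0 < μ) (hx : 0 ≤ x) (n : ℕ) (f : ℝ → ℝ) :
    LK μ n f x / lnMu μ x = kantorovich n (fun t => f t / lnMu μ t) (aFun μ n x) :=
  mul_div_cancel_left₀ _ (Real.log_pos (by linarith)).ne'

theorem stmt6_general (μ p : ℝ) (hμ : 0 < μ) (hp : 1 ≤ p) (n : ℕ) (f : ℝ → ℝ)
    (hf : MemLp (fun x => f x / lnMu μ x) (ENNReal.ofReal p)
      (volume.restrict (Set.Icc (0:ℝ) 1))) :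
    normPMu μ p (LK μ n f) ^ p ≤
        (1 + 1 / (((n : ℝ) + 1) * (1 + μ))) * normPMu μ p f ^ p ∧
      normPMu μ p (LK μ n f) ^ p ≤ (1 + 1 / (1 + μ)) * normPMu μ p f ^ p := by
  have hp0 : 0 < p := by linarith
  have hμ1 : 0 < 1 + μ := by linarith
  set g := fun t => f t / lnMu μ t
  have hg := hf.intervalIntegrable_of_Icc hp zero_le_one
  have hgp := hf.intervalIntegrable_abs_rpow_of_Icc hp0 zero_le_one
  have hbound : normPMu μ p (LK μ n f) ^ p ≤
      (1 + 1 / (((n : ℝ) + 1) * (1 + μ))) * normPMu μ p f ^ p := by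
    rw [normPMu_rpow_eq hp0, normPMu_rpow_eq hp0]
    calc ∫ x in (0 : ℝ)..1, |LK μ n f x / lnMu μ x| ^ p
        = ∫ x in (0 : ℝ)..1, |kantorovich n g (aFun μ n x)| ^ p :=
          integral_congr fun x hx => by
            rw [uIcc_of_le zero_le_one] at hx
            simp only [LK_div_lnMu hμ hx.1, g]
      _ ≤ ∫ x in (0 : ℝ)..1, kantorovich n (fun t => |g t| ^ p) (aFun μ n x) :=
          integral_mono_on zero_le_one
            (((continuousOn_kantorovich_comp_aFun hμ1 g).abs.rpow_const fun _ _ =>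
              Or.inr hp0.le).intervalIntegrable)
            (continuousOn_kantorovich_comp_aFun hμ1 _).intervalIntegrable fun x hx =>
            abs_kantorovich_rpow_le hp hg hgp (aFun_mem_Icc hμ1 hx)
      _ ≤ _ := integral_kantorovich_comp_aFun_le hμ1 hgp fun t => by positivity
  refine ⟨hbound, hbound.trans ?_⟩
  have hf_nonneg : 0 ≤ normPMu μ p f ^ p := by
    rw [normPMu_rpow_eq hp0]
    exact integral_nonneg zero_le_one fun x _ => by positivity
  gcongr
  exact le_mul_of_one_le_left hμ1.le (by simp)

theorem stmt6 (μ p : ℝ) (hμ : 0 < μ) (hp : 1 ≤ p) (n : ℕ) (hn : 1 ≤ n) (f : ℝ → ℝ)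
    (hf : MemLp (fun x => f x / lnMu μ x) (ENNReal.ofReal p)
      (volume.restrict (Set.Icc (0:ℝ) 1))) :
    normPMu μ p (LK μ n f) ^ p ≤
        (1 + 1 / (((n : ℝ) + 1) * (1 + μ))) * normPMu μ p f ^ p ∧
      normPMu μ p (LK μ n f) ^ p ≤ (1 + 1 / (1 + μ)) * normPMu μ p f ^ p :=
  stmt6_general μ p hμ hp n f hf
end

section
/- Let μ > 0 and let f : (0,1) → ℝ be such that f_μ = f/ln_μ is twice continuously differentiable on (0,1). Then for every x ∈ (0,1) the differential operator 𝒟(f)(x) := ln_μ(x)[ f_μ'(x)(1/2 + (x−x²)/(2(1+μ)) − x) + f_μ''(x)(x−x²)/2 ] can be written in the divergence form 𝒟(f)(x) = (1/w₂(x)) · d/dx [ (1/w₁(x)) · d/dx ( f(x)/w₀(x) ) ], where w₀(x) := ln_μ(x), w₁(x) := e^{−x/(1+μ)}/(x − x²), and w₂(x) := (2/ln_μ(x)) e^{x/(1+μ)}. -/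
open MeasureTheory Filter Set

/-- The weights `w₀, w₁, w₂` of the divergence form. -/
noncomputable def w0 (μ x : ℝ) : ℝ := lnMu μ x
noncomputable def w1 (μ x : ℝ) : ℝ := Real.exp (-x / (1 + μ)) / (x - x ^ 2)
noncomputable def w2 (μ x : ℝ) : ℝ := (2 / lnMu μ x) * Real.exp (x / (1 + μ))

/-! Since `w₀ = ln_μ` and `1/w₁(y) = (y - y²) e^{y/(1+μ)}`, the inner expression is
`(y - y²) e^{y/(1+μ)} f_μ'(y)`, and the claim is the product rule for it; the factor
`w₂ = 2 e^{x/(1+μ)} / ln_μ` cancels the exponential and turns `1 - 2x + (x - x²)/(1+μ)`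
into the drift of `𝒟`. -/

theorem lnMu_pos {μ x : ℝ} (h : 0 < μ + x) : 0 < lnMu μ x :=
  Real.log_pos (by linarith)

theorem one_div_w1 (μ y : ℝ) : 1 / w1 μ y = (y - y ^ 2) * Real.exp (y / (1 + μ)) := by
  rw [w1, one_div_div, div_eq_mul_inv, ← Real.exp_neg, neg_div, neg_neg]

theorem hasDerivAt_deriv_of_contDiffOn_two {u : ℝ → ℝ} {s : Set ℝ} {x : ℝ}
    (hu : ContDiffOn ℝ 2 u s) (hs : IsOpen s) (hx : x ∈ s) :
    HasDerivAt (deriv u) (deriv (deriv u) x) x :=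
  (((hu.deriv_of_isOpen hs (by norm_num)).differentiableOn one_ne_zero).differentiableAt
    (hs.mem_nhds hx)).hasDerivAt

theorem hasDerivAt_sub_sq_mul_exp_div_mul {g : ℝ → ℝ} {g' c x : ℝ} (hg : HasDerivAt g g' x) :
    HasDerivAt (fun y => (y - y ^ 2) * Real.exp (y / c) * g y)
      (Real.exp (x / c) * ((1 - 2 * x + (x - x ^ 2) / c) * g x + (x - x ^ 2) * g')) x := by
  have hpoly : HasDerivAt (fun y : ℝ => y - y ^ 2) (1 - 2 * x) x :=
    ((hasDerivAt_id' x).sub ((hasDerivAt_id' x).pow 2)).congr_deriv (by norm_num)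
  have hexp : HasDerivAt (fun y : ℝ => Real.exp (y / c)) (Real.exp (x / c) / c) x :=
    ((hasDerivAt_id' x).div_const c).exp.congr_deriv (by ring)
  exact ((hpoly.mul hexp).mul hg).congr_deriv (by simp only [Pi.mul_apply]; ring)

theorem stmt12 (μ : ℝ) (hμ : 0 < μ) (f : ℝ → ℝ)
    (hf : ContDiffOn ℝ 2 (fun t => f t / lnMu μ t) (Set.Ioo 0 1))
    (x : ℝ) (hx : x ∈ Set.Ioo (0:ℝ) 1) :
    HasDerivAt (fun y => (1 / w1 μ y) * deriv (fun t => f t / w0 μ t) y)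
      (w2 μ x *
        (lnMu μ x *
          (deriv (fun t => f t / lnMu μ t) x *
              (1 / 2 + (x - x ^ 2) / (2 * (1 + μ)) - x) +
            deriv (deriv (fun t => f t / lnMu μ t)) x * ((x - x ^ 2) / 2)))) x := by
  have hL : lnMu μ x ≠ 0 := (lnMu_pos (by linarith [hx.1])).ne'
  simp only [one_div_w1, w0]
  refine (hasDerivAt_sub_sq_mul_exp_div_mul
    (hasDerivAt_deriv_of_contDiffOn_two hf isOpen_Ioo hx)).congr_deriv ?_
  rw [w2]
  field_simp
  ring
end
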